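/- Let n ≥ 2 be an integer. If tan(π/(2n)) is the square root of a positive rational number (i.e. tan²(π/(2n)) ∈ ℚ), then n = 2 or n = 3. -/

import Mathlib

/-! By the half-angle formula, a rational value `q` of `tan² (π / (2n))` makes
`cos (π / n) = (1 - q) / (1 + q)` rational, while by Niven's theorem `cos (π / n)` is
irrational as soon as `n ≥ 4`. -/

open Real

theorem Real.exists_rat_cos_eq_of_tan_half_sq_eq_rat {x : ℝ} (hx : cos x ≠ -1) {q : ℚ}
    (hq : tan (x / 2) ^ 2 = q) : ∃ r : ℚ, cos x = r :=
  ⟨(1 - q) / (1 + q), by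
    rw [cos_eq_two_mul_tan_half_div_one_sub_tan_half_sq x hx, hq]
    push_cast
    rfl⟩

theorem Real.irrational_cos_pi_div_natCast {n : ℕ} (hn : 3 < n) : Irrational (cos (π / n)) := by
  have hden : ((n : ℚ)⁻¹).den = n := by
    rw [Rat.inv_natCast_den, if_neg (by omega)]
  simpa [div_eq_inv_mul] using irrational_cos_rat_mul_pi (r := (n : ℚ)⁻¹) (by rwa [hden])

/-- If `n ≥ 2` and `tan(π/(2n))` is the square root of a positive rational number
(i.e. `tan²(π/(2n)) ∈ ℚ`), then `n = 2` or `n = 3`. -/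
theorem tan_sq_rational_imp (n : ℕ) (hn : 2 ≤ n)
    (h : ∃ q : ℚ, 0 < q ∧ (Real.tan (Real.pi / (2 * n))) ^ 2 = (q : ℝ)) :
    n = 2 ∨ n = 3 := by
  by_contra hn23
  have hn4 : 3 < n := by omega
  obtain ⟨q, -, hq⟩ := h
  have hcos_pos : 0 < cos (π / n) := by
    have hπn : π / n < π / 2 :=
      div_lt_div_of_pos_left pi_pos two_pos (by exact_mod_cast (by omega : 2 < n))
    exact cos_pos_of_mem_Ioo ⟨by linarith [show 0 < π / n by positivity], hπn⟩
  obtain ⟨r, hr⟩ := exists_rat_cos_eq_of_tan_half_sq_eq_rat (by linarith) (q := q) (by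
    rwa [div_div, mul_comm _ (2 : ℝ)])
  exact (irrational_cos_pi_div_natCast hn4).ne_rat r hr
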